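/- Let D > 0, Δt > 0, and K(ξ, Δt) = (4πDΔt)^{−1/2} exp(−ξ²/(4DΔt)). Let Ω_P = (−∞,0), Ω_B = (0,∞), and let N ∈ ℕ. Let p : Ω_P → [0,∞) be integrable with ∫_{Ω_P} p = N − m, let x₁, …, x_m ∈ Ω_B be fixed, and define μ = p·1_{Ω_P} dx + Σ_{i=1}^m δ_{x_i}, p̃(x) = ∫_{Ω_P} K(x − x', Δt) p(x') dx', and α = ∫_0^∞ p̃(x) dx, assuming 0 < α < 1 and α < N − m. Perform one step of the PBD algorithm: let ξ be Bernoulli(α), set β = (N − m − 1)/(N − m − α) if ξ = 1 and β = (N − m)/(N − m − α) if ξ = 0; independently move each particle to Z_i = x_i + √(2DΔt) η_i with η_i independent standard normals; define the updated continuum measure on Ω_P by q = β p̃ · 1_{Ω_P} dx + Σ_{i : Z_i ∈ Ω_P} δ_{Z_i}. Then for every Borel set A ⊆ Ω_P, E[q(A)] = ∫_A ∫_ℝ K(x − x', Δt) dμ(x') dx = ∫_A [ p̃(x) + Σ_{i=1}^m K(x − x_i, Δt) ] dx. -/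

import Mathlib

/-! By linearity of expectation the two parts of `q(A)` can be treated separately. The rescaling
factor has mean `α (M - 1)/(M - α) + (1 - α) M/(M - α) = 1` (with `M = N - m`), so the continuum
part contributes `∫_A p̃` unchanged. The moved particle `Z i = x i + √(2DΔt) η i` is Gaussian with
mean `x i` and variance `2DΔt`, whose density is `K(· - x i, Δt)`, so `P(Z i ∈ A) = ∫_A K(x - x i)`.
-/

open MeasureTheory ProbabilityTheory Set
open scoped Classical

/-- The Gaussian heat kernel `K(ξ, τ) = (4πDτ)^{-1/2} exp(-ξ²/(4Dτ))`. -/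
noncomputable def heatKernel (D ξ τ : ℝ) : ℝ :=
  (Real.sqrt (4 * Real.pi * D * τ))⁻¹ * Real.exp (-ξ ^ 2 / (4 * D * τ))

section HeatKernel

variable {D Δt : ℝ}

lemma heatKernel_eq_gaussianPDFReal (h : 0 ≤ D * Δt) (μ x : ℝ) :
    heatKernel D (x - μ) Δt = gaussianPDFReal μ (2 * D * Δt).toNNReal x := by
  rw [heatKernel, gaussianPDFReal, Real.coe_toNNReal _ (by linarith)]
  ring_nf

lemma integrable_heatKernel (h : 0 ≤ D * Δt) (μ : ℝ) :
    Integrable (fun x ↦ heatKernel D (x - μ) Δt) := by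
  simpa only [heatKernel_eq_gaussianPDFReal h] using integrable_gaussianPDFReal μ _

lemma setIntegral_heatKernel_eq_gaussianReal (h : 0 < D * Δt) (μ : ℝ) {A : Set ℝ}
    (hA : MeasurableSet A) :
    ∫ x in A, heatKernel D (x - μ) Δt = (gaussianReal μ (2 * D * Δt).toNNReal).real A := by
  have hv : (2 * D * Δt).toNNReal ≠ 0 := by
    rw [Ne, Real.toNNReal_eq_zero, not_le]
    linarith
  rw [measureReal_def, gaussianReal_apply_eq_integral _ hv, ENNReal.toReal_ofReal
    (integral_nonneg fun x ↦ gaussianPDFReal_nonneg _ _ _)]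
  exact setIntegral_congr_fun hA fun x _ ↦ heatKernel_eq_gaussianPDFReal h.le μ x

lemma integrable_setIntegral_heatKernel_mul (h : 0 ≤ D * Δt) {p : ℝ → ℝ} {s : Set ℝ}
    (hs : MeasurableSet s) (hp : IntegrableOn p s) :
    Integrable (fun x ↦ ∫ y in s, heatKernel D (x - y) Δt * p y) := by
  have hK : Integrable (fun ξ ↦ heatKernel D ξ Δt) := by
    simpa using integrable_heatKernel h 0
  convert (hp.integrable_indicator hs).integrable_convolution
    (ContinuousLinearMap.mul ℝ ℝ) hK using 1
  ext x
  rw [convolution_def, ← integral_indicator hs]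
  congr 1 with y
  simp only [indicator_apply, ContinuousLinearMap.mul_apply']
  split_ifs <;> ring

end HeatKernel

section Probability

variable {Ω : Type*} [MeasurableSpace Ω] {P : Measure Ω}

lemma integral_ite_const [IsProbabilityMeasure P] {p : Ω → Prop} [DecidablePred p]
    (hp : MeasurableSet {ω | p ω}) (a b : ℝ) :
    ∫ ω, (if p ω then a else b) ∂P = P.real {ω | p ω} * a + (1 - P.real {ω | p ω}) * b := by
  have hpiecewise :
      (fun ω ↦ if p ω then a else b) = {ω | p ω}.piecewise (fun _ ↦ a) (fun _ ↦ b) := by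
    ext ω
    simp only [piecewise, mem_ofPred_eq]
  rw [hpiecewise, integral_piecewise hp integrableOn_const integrableOn_const, setIntegral_const,
    setIntegral_const, probReal_compl_eq_one_sub hp, smul_eq_mul, smul_eq_mul]

lemma integrable_ite_const [IsFiniteMeasure P] {p : Ω → Prop} [DecidablePred p]
    (hp : MeasurableSet {ω | p ω}) (a b : ℝ) :
    Integrable (fun ω ↦ if p ω then a else b) P := by
  refine .of_bound (Measurable.ite hp measurable_const measurable_const).aestronglyMeasurable
    (max ‖a‖ ‖b‖) (ae_of_all _ fun ω ↦ ?_)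
  split_ifs
  exacts [le_max_left _ _, le_max_right _ _]

lemma hasLaw_const_add_sqrt_mul {η : Ω → ℝ} (hη : HasLaw η (gaussianReal 0 1) P) (x : ℝ)
    {v : ℝ} (hv : 0 ≤ v) :
    HasLaw (fun ω ↦ x + √v * η ω) (gaussianReal x v.toNNReal) P := by
  convert gaussianReal_const_add (gaussianReal_const_mul hη √v) x using 2
  · ring
  · ext
    simp [Real.sq_sqrt hv, hv]

lemma ProbabilityTheory.HasLaw.integral_ite_mem {ν : Measure ℝ} {Z : Ω → ℝ} (hZ : HasLaw Z ν P)
    {A : Set ℝ} (hA : MeasurableSet A) :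
    ∫ ω, (if Z ω ∈ A then (1 : ℝ) else 0) ∂P = ν.real A := by
  rw [← integral_indicator_one hA,
    ← hZ.integral_comp ((measurable_one (α := ℝ) (β := ℝ)).indicator hA).aestronglyMeasurable]
  rfl

lemma ProbabilityTheory.HasLaw.integrable_ite_mem [IsFiniteMeasure P] {ν : Measure ℝ}
    {Z : Ω → ℝ} (hZ : HasLaw Z ν P) {A : Set ℝ} (hA : MeasurableSet A) :
    Integrable (fun ω ↦ if Z ω ∈ A then (1 : ℝ) else 0) P :=
  (integrable_const (1 : ℝ)).indicator₀ (hZ.aemeasurable.nullMeasurableSet_preimage hA)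

end Probability

theorem pbd_first_algorithm_mean_in_PDE_domain_general
    {Ω : Type*} [MeasurableSpace Ω] (P : Measure Ω) [IsProbabilityMeasure P]
    (D Δt : ℝ) (hD : 0 < D) (hΔt : 0 < Δt) (N : ℕ)
    -- the continuum density on `Ω_P = (−∞, 0)` with total mass `N − m`
    (p : ℝ → ℝ) (hpint : IntegrableOn p (Iio 0))
    (m : ℕ)
    -- the particle positions in `Ω_B = (0, ∞)`
    (xs : Fin m → ℝ)
    -- the diffused continuum density `p̃` and the crossing mass `α`
    (ptilde : ℝ → ℝ)
    (hptilde : ∀ x, ptilde x = ∫ y in Iio (0 : ℝ), heatKernel D (x - y) Δt * p y)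
    (α : ℝ)
    (hα0 : 0 < α) (hαN : α < (N : ℝ) - (m : ℝ))
    -- the Bernoulli(α) creation event `ξ`
    (ξ : Ω → Bool) (hξmeas : Measurable ξ)
    (hξlaw : P {ω | ξ ω = true} = ENNReal.ofReal α)
    -- the independent standard-normal displacements of the existing particles
    (η : Fin m → Ω → ℝ)
    (hηlaw : ∀ i, Measure.map (η i) P = gaussianReal 0 1) :
    -- conclusion: for every Borel `A ⊆ Ω_P`, the expected value of the updated continuum
    -- measure `q(A) = β ∫_A p̃ + #{i : Z_i ∈ A}` equals the heat-kernel evolution of the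
    -- combined initial state
    ∀ A : Set ℝ, A ⊆ Iio (0 : ℝ) → MeasurableSet A →
      ∫ ω, ((if ξ ω = true then ((N : ℝ) - (m : ℝ) - 1) / ((N : ℝ) - (m : ℝ) - α)
             else ((N : ℝ) - (m : ℝ)) / ((N : ℝ) - (m : ℝ) - α)) * (∫ x in A, ptilde x) +
            ∑ i, if xs i + Real.sqrt (2 * D * Δt) * η i ω ∈ A then (1 : ℝ) else 0) ∂P
        = ∫ x in A, (ptilde x + ∑ i, heatKernel D (x - xs i) Δt) := by
  intro A _ hA
  have hDΔt : 0 < D * Δt := mul_pos hD hΔt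
  have hξ : MeasurableSet {ω | ξ ω = true} := hξmeas (measurableSet_singleton true)
  have hη i : HasLaw (η i) (gaussianReal 0 1) P :=
    ⟨.of_map_ne_zero (hηlaw i ▸ IsProbabilityMeasure.ne_zero _), hηlaw i⟩
  have hZ i : HasLaw (fun ω ↦ xs i + √(2 * D * Δt) * η i ω)
      (gaussianReal (xs i) (2 * D * Δt).toNNReal) P :=
    hasLaw_const_add_sqrt_mul (hη i) (xs i) (by positivity)
  have hβ : ∫ ω, (if ξ ω = true then ((N : ℝ) - m - 1) / (N - m - α)
      else ((N : ℝ) - m) / (N - m - α)) ∂P = 1 := by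
    rw [integral_ite_const hξ, measureReal_def, hξlaw, ENNReal.toReal_ofReal hα0.le]
    field_simp [(sub_pos.2 hαN).ne']
    ring
  have hptilde_int : IntegrableOn ptilde A := by
    rw [funext hptilde]
    exact (integrable_setIntegral_heatKernel_mul hDΔt.le measurableSet_Iio hpint).integrableOn
  have hK_int i : IntegrableOn (fun x ↦ heatKernel D (x - xs i) Δt) A :=
    (integrable_heatKernel hDΔt.le _).integrableOn
  rw [integral_add ((integrable_ite_const hξ _ _).mul_const _)
      (integrable_finsetSum _ fun i _ ↦ (hZ i).integrable_ite_mem hA),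
    integral_mul_const, hβ, one_mul, integral_finsetSum _ fun i _ ↦ (hZ i).integrable_ite_mem hA,
    integral_add hptilde_int (integrable_finsetSum _ fun i _ ↦ hK_int i),
    integral_finsetSum _ fun i _ ↦ hK_int i]
  simp_rw [(hZ _).integral_ite_mem hA, setIntegral_heatKernel_eq_gaussianReal hDΔt _ hA]

/-- One step of the first PBD algorithm (A1)–(A5) satisfies Condition (C.3):
with `Ω_P = (−∞,0)`, `Ω_B = (0,∞)`, continuum density `p` on `Ω_P` of mass `N − m`,
particles at `x₁,…,x_m ∈ Ω_B`, diffused density `p̃` and crossing mass `α`, rescaling factor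
`β = (N−m−1)/(N−m−α)` if a particle is created (probability `α`) and `β = (N−m)/(N−m−α)`
otherwise, and particle moves `Z i = x i + √(2DΔt) η i`, the updated continuum measure
`q = β p̃ 1_{Ω_P} dx + Σ_{i : Z_i ∈ Ω_P} δ_{Z_i}` satisfies, for every Borel `A ⊆ Ω_P`,
`E[q(A)] = ∫_A (p̃(x) + Σ_i K(x − x_i, Δt)) dx`. -/
theorem pbd_first_algorithm_mean_in_PDE_domain
    {Ω : Type*} [MeasurableSpace Ω] (P : Measure Ω) [IsProbabilityMeasure P]
    (D Δt : ℝ) (hD : 0 < D) (hΔt : 0 < Δt) (N : ℕ)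
    -- the continuum density on `Ω_P = (−∞, 0)` with total mass `N − m`
    (p : ℝ → ℝ) (hp0 : ∀ x ∈ Iio (0 : ℝ), 0 ≤ p x) (hpint : IntegrableOn p (Iio 0))
    (m : ℕ) (hmass : ∫ x in Iio (0 : ℝ), p x = (N : ℝ) - (m : ℝ))
    -- the particle positions in `Ω_B = (0, ∞)`
    (xs : Fin m → ℝ) (hxs : ∀ i, xs i ∈ Ioi (0 : ℝ))
    -- the diffused continuum density `p̃` and the crossing mass `α`
    (ptilde : ℝ → ℝ)
    (hptilde : ∀ x, ptilde x = ∫ y in Iio (0 : ℝ), heatKernel D (x - y) Δt * p y)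
    (α : ℝ) (hα : α = ∫ x in Ioi (0 : ℝ), ptilde x)
    (hα0 : 0 < α) (hα1 : α < 1) (hαN : α < (N : ℝ) - (m : ℝ))
    -- the Bernoulli(α) creation event `ξ`
    (ξ : Ω → Bool) (hξmeas : Measurable ξ)
    (hξlaw : P {ω | ξ ω = true} = ENNReal.ofReal α)
    -- the independent standard-normal displacements of the existing particles
    (η : Fin m → Ω → ℝ)
    (hηmeas : ∀ i, Measurable (η i))
    (hηlaw : ∀ i, Measure.map (η i) P = gaussianReal 0 1)
    (hηindep : iIndepFun η P)
    -- the displacements are independent of the creation step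
    (hindep : IndepFun ξ (fun ω i => η i ω) P) :
    -- conclusion: for every Borel `A ⊆ Ω_P`, the expected value of the updated continuum
    -- measure `q(A) = β ∫_A p̃ + #{i : Z_i ∈ A}` equals the heat-kernel evolution of the
    -- combined initial state
    ∀ A : Set ℝ, A ⊆ Iio (0 : ℝ) → MeasurableSet A →
      ∫ ω, ((if ξ ω = true then ((N : ℝ) - (m : ℝ) - 1) / ((N : ℝ) - (m : ℝ) - α)
             else ((N : ℝ) - (m : ℝ)) / ((N : ℝ) - (m : ℝ) - α)) * (∫ x in A, ptilde x) +
            ∑ i, if xs i + Real.sqrt (2 * D * Δt) * η i ω ∈ A then (1 : ℝ) else 0) ∂P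
        = ∫ x in A, (ptilde x + ∑ i, heatKernel D (x - xs i) Δt) :=
  pbd_first_algorithm_mean_in_PDE_domain_general P D Δt hD hΔt N p hpint m xs ptilde hptilde α hα0
    hαN ξ hξmeas hξlaw η hηlaw
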